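/- The pp-wave metric satisfies the vacuum Einstein equation, i.e. Ric_{ab}(p) = 0 for all p ∈ ℝ⁴ and all indices a, b, if and only if H satisfies the two-dimensional Laplace equation ∂₂∂₂H(p) + ∂₃∂₃H(p) = 0 for every p ∈ ℝ⁴ (H is harmonic in the transverse variables x and y). -/

import Mathlib

noncomputable section

open scoped BigOperators

/-- Partial derivative of `f : ℝ⁴ → ℝ` in the `μ`-th coordinate direction. -/
def pd (μ : Fin 4) (f : (Fin 4 → ℝ) → ℝ) (p : Fin 4 → ℝ) : ℝ :=
  fderiv ℝ f p (Pi.single μ 1)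

/-- The pp-wave metric `ds² = 2H du² + 2 du dv − dx² − dy²` in coordinates
`(v,u,x,y)`. -/
def gmet (H : (Fin 4 → ℝ) → ℝ) (p : Fin 4 → ℝ) : Matrix (Fin 4) (Fin 4) ℝ :=
  Matrix.of fun μ ν =>
    if μ = 1 ∧ ν = 1 then 2 * H p
    else if (μ = 0 ∧ ν = 1) ∨ (μ = 1 ∧ ν = 0) then 1
    else if (μ = 2 ∧ ν = 2) ∨ (μ = 3 ∧ ν = 3) then (-1 : ℝ)
    else 0

/-- The pointwise inverse of the pp-wave metric. -/
def ginv (H : (Fin 4 → ℝ) → ℝ) (p : Fin 4 → ℝ) : Matrix (Fin 4) (Fin 4) ℝ :=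
  Matrix.of fun μ ν =>
    if μ = 0 ∧ ν = 0 then -2 * H p
    else if (μ = 0 ∧ ν = 1) ∨ (μ = 1 ∧ ν = 0) then 1
    else if (μ = 2 ∧ ν = 2) ∨ (μ = 3 ∧ ν = 3) then (-1 : ℝ)
    else 0

/-- Christoffel symbols `Γ^l_{μν}` of the Levi-Civita connection of the pp-wave metric. -/
def Γpp (H : (Fin 4 → ℝ) → ℝ) (l μ ν : Fin 4) (p : Fin 4 → ℝ) : ℝ :=
  (1 / 2) * ∑ σ : Fin 4, ginv H p l σ *
    (pd μ (fun q => gmet H q ν σ) p + pd ν (fun q => gmet H q μ σ) p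
      - pd σ (fun q => gmet H q μ ν) p)

/-- Riemann curvature components
`R^a_{bμν} = ∂_μ Γ^a_{bν} − ∂_ν Γ^a_{bμ} + Σ_γ (Γ^a_{γμ}Γ^γ_{bν} − Γ^a_{γν}Γ^γ_{bμ})`. -/
def Riem (H : (Fin 4 → ℝ) → ℝ) (a b μ ν : Fin 4) (p : Fin 4 → ℝ) : ℝ :=
  pd μ (Γpp H a b ν) p - pd ν (Γpp H a b μ) p
    + ∑ γ : Fin 4, (Γpp H a γ μ p * Γpp H γ b ν p - Γpp H a γ ν p * Γpp H γ b μ p)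

/-- Ricci tensor `Ric_{bν} = Σ_a R^a_{baν}`. -/
def Ricci (H : (Fin 4 → ℝ) → ℝ) (b ν : Fin 4) (p : Fin 4 → ℝ) : ℝ :=
  ∑ a : Fin 4, Riem H a b a ν p

/-- Scalar curvature `S = Σ_{β,ν} ginv^{βν} Ric_{βν}`. -/
def Scal (H : (Fin 4 → ℝ) → ℝ) (p : Fin 4 → ℝ) : ℝ :=
  ∑ b : Fin 4, ∑ ν : Fin 4, ginv H p b ν * Ricci H b ν p

/-!
Only `g₁₁ = 2H` is non-constant and `∂ᵥH = 0`, so the non-zero Christoffel symbols are among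
`Γ⁰₁ᵢ = Γ⁰ᵢ₁ = ∂ᵢH` and `Γʲ₁₁ = ∂ⱼH` (`j = 2, 3`). Each has upper index in `{0, 2, 3}`, a lower
index `1` and no lower index `0`, which kills every quadratic term of the Ricci tensor as well as
the trace `Γᵃ_{ba}`. What remains is `∂ₐΓᵃ_{bν}`; there `∂₀∂ᵢH = ∂ᵢ∂₀H = 0`, and only
`Ric₁₁ = ∂₂∂₂H + ∂₃∂₃H` survives.
-/

theorem fderiv_fderiv_apply_comm {E F : Type*} [NormedAddCommGroup E] [NormedSpace ℝ E]
    [NormedAddCommGroup F] [NormedSpace ℝ F] {f : E → F} {x : E} (hf : ContDiffAt ℝ 2 f x)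
    (v w : E) :
    fderiv ℝ (fun y => fderiv ℝ f y v) x w = fderiv ℝ (fun y => fderiv ℝ f y w) x v := by
  have hdiff : DifferentiableAt ℝ (fderiv ℝ f) x :=
    (hf.fderiv_right (m := 1) le_rfl).differentiableAt one_ne_zero
  rw [fderiv_clm_apply hdiff (differentiableAt_const v),
    fderiv_clm_apply hdiff (differentiableAt_const w)]
  simpa using hf.isSymmSndFDerivAt (by simp) w v

section PPWave

variable {H : (Fin 4 → ℝ) → ℝ}

theorem pd_const (μ : Fin 4) (c : ℝ) : pd μ (fun _ => c) = 0 := by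
  funext p
  simp [pd]

theorem pd_pd_comm (hH : ContDiff ℝ 2 H) (μ ν : Fin 4) : pd μ (pd ν H) = pd ν (pd μ H) := by
  funext p
  exact fderiv_fderiv_apply_comm hH.contDiffAt _ _

theorem pd_gmet (μ ν σ : Fin 4) :
    pd μ (fun q => gmet H q ν σ) = fun p => if ν = 1 ∧ σ = 1 then 2 * pd μ H p else 0 := by
  funext p
  by_cases h : ν = 1 ∧ σ = 1
  · simp only [gmet, pd, Matrix.of_apply, if_pos h]
    rw [show (fun q => 2 * H q) = (2 : ℝ) • H from rfl, fderiv_const_smul_field]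
    rfl
  · simp [gmet, pd, h]

theorem Γpp_eq (h0 : ∀ p, pd 0 H p = 0) (l μ ν : Fin 4) :
    Γpp H l μ ν = fun p =>
      (if l = 0 ∧ μ = 1 then pd ν H p else 0) + (if l = 0 ∧ ν = 1 then pd μ H p else 0)
      - (if l = 0 ∧ μ = 1 ∧ ν = 1 then pd 1 H p else 0)
      + (if (l = 2 ∨ l = 3) ∧ μ = 1 ∧ ν = 1 then pd l H p else 0) := by
  funext p
  simp only [Γpp, Fin.sum_univ_four, pd_gmet]
  fin_cases l <;> by_cases hμ : μ = 1 <;> by_cases hν : ν = 1 <;> simp [ginv, hμ, hν, h0 p]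

theorem Ricci_eq (hH : ContDiff ℝ 2 H) (h0 : ∀ p, pd 0 H p = 0) (b ν : Fin 4) :
    Ricci H b ν = fun p => if b = 1 ∧ ν = 1 then pd 2 (pd 2 H) p + pd 3 (pd 3 H) p else 0 := by
  have hpd0 : pd 0 H = 0 := funext h0
  have hpd0_pd : ∀ μ, pd 0 (pd μ H) = 0 := fun μ => by
    rw [pd_pd_comm hH, hpd0]
    exact pd_const μ 0
  funext p
  simp only [Ricci, Riem, Fin.sum_univ_four, Γpp_eq h0]
  fin_cases b <;> fin_cases ν <;> simp [h0, hpd0_pd, pd_const]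

end PPWave

/-- The pp-wave metric solves the vacuum Einstein equation `Ric = 0` iff `H` is
harmonic in the transverse variables: `∂₂∂₂H + ∂₃∂₃H = 0`. -/
theorem pp_wave_vacuum_iff_harmonic (H : (Fin 4 → ℝ) → ℝ)
    (hH : ContDiff ℝ (⊤ : ℕ∞) H) (h0 : ∀ p, pd 0 H p = 0) :
    (∀ (p : Fin 4 → ℝ) (a b : Fin 4), Ricci H a b p = 0) ↔
      (∀ p : Fin 4 → ℝ, pd 2 (pd 2 H) p + pd 3 (pd 3 H) p = 0) := by
  have hH2 : ContDiff ℝ 2 H := hH.of_le (WithTop.coe_le_coe.mpr le_top)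
  simp only [Ricci_eq hH2 h0]
  constructor
  · intro h p
    simpa using h p 1 1
  · intro h p a b
    split_ifs
    exacts [h p, rfl]
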